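/- Let G be a 2-regular loopless multigraph on n vertices with k cycles of odd length (and possibly other even cycles), n − k even. If C' is a compatible Hamiltonian cycle for the multigraph G' obtained from G by contracting one edge incident to a chosen vertex in each odd cycle, then C' can be extended to a compatible Hamiltonian cycle for G; in particular, G has at least one compatible cycle. -/

import Mathlib

abbrev Edges (n : ℕ) : Type := Multiset (Sym2 (Fin n))

/-- Degree of a vertex in a loopless multigraph given by an edge multiset. -/
def edeg {n : ℕ} (E : Edges n) (v : Fin n) : ℕ :=
  Multiset.card (E.filter (fun e => v ∈ e))

/-- The multigraph has no loops. -/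
def Loopless {n : ℕ} (E : Edges n) : Prop := ∀ e ∈ E, ¬ e.IsDiag

/-- A perfect matching: a loopless 1-regular multigraph on all vertices. -/
def IsPM {n : ℕ} (E : Edges n) : Prop :=
  Loopless E ∧ ∀ v, edeg E v = 1

/-- Adjacency in the multigraph. -/
def EAdj {n : ℕ} (E : Edges n) (u v : Fin n) : Prop :=
  u ≠ v ∧ s(u, v) ∈ E

/-- A Hamiltonian cycle: a connected, loopless, 2-regular multigraph on all vertices. -/
def IsHam {n : ℕ} (E : Edges n) : Prop :=
  Loopless E ∧ (∀ v, edeg E v = 2) ∧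
    ∀ u v : Fin n, Relation.ReflTransGen (EAdj E) u v

/-- A 2-regular loopless multigraph (a disjoint union of cycles). -/
def TwoRegular {n : ℕ} (E : Edges n) : Prop :=
  Loopless E ∧ ∀ v, edeg E v = 2

/-- Every connected component (cycle) has an even number of vertices,
i.e. all cycles have even length. -/
def EvenCycles {n : ℕ} (E : Edges n) : Prop :=
  ∀ v : Fin n, Even (Set.ncard {u | Relation.ReflTransGen (EAdj E) v u})

/-- `C` is a compatible cycle for `G`: a Hamiltonian cycle such that the edge-disjoint
union `G ∪ C` decomposes into two edge-disjoint Hamiltonian cycles. -/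
def Compatible {n : ℕ} (G C : Edges n) : Prop :=
  IsHam C ∧ ∃ C₁ C₂ : Edges n, IsHam C₁ ∧ IsHam C₂ ∧ G + C = C₁ + C₂


/-- 2-regular on the vertex set `V`, with no edges touching vertices outside `V`. -/
def TwoRegularOn {n : ℕ} (V : Finset (Fin n)) (E : Edges n) : Prop :=
  Loopless E ∧ (∀ v ∈ V, edeg E v = 2) ∧ ∀ v ∉ V, edeg E v = 0

/-- A Hamiltonian cycle on the vertex set `V`. -/
def IsHamOn {n : ℕ} (V : Finset (Fin n)) (E : Edges n) : Prop :=
  TwoRegularOn V E ∧ ∀ u ∈ V, ∀ w ∈ V, Relation.ReflTransGen (EAdj E) u w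

/-- A compatible cycle for `G`, relative to the vertex set `V`. -/
def CompatibleOn {n : ℕ} (V : Finset (Fin n)) (G C : Edges n) : Prop :=
  IsHamOn V C ∧ ∃ C₁ C₂ : Edges n, IsHamOn V C₁ ∧ IsHamOn V C₂ ∧ G + C = C₁ + C₂

/-- `E` is obtained from `F` by inserting the new vertex `v` into some edge `ab` of `F`
(equivalently, `F` is obtained from `E` by contracting an edge incident to `v`). -/
def InsertV {n : ℕ} (v : Fin n) (E F : Edges n) : Prop :=
  ∃ a b : Fin n, a ≠ v ∧ b ≠ v ∧ s(a, b) ∈ F ∧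
    E = (F.erase s(a, b)) + {s(a, v), s(v, b)}

/-- `InsertList l E F` : `E` is obtained from `F` by successively inserting
the vertices in the list `l`, each into some edge. -/
def InsertList {n : ℕ} : List (Fin n) → Edges n → Edges n → Prop
  | [] => fun E F => E = F
  | v :: l => fun E F => ∃ E' : Edges n, InsertV v E E' ∧ InsertList l E' F

/-!
Undo the contractions one vertex at a time. Suppose `G` arises from `G'` by inserting `v` into
an edge `ab`, and `G' + C' = C₁ + C₂` with `C₁, C₂` Hamiltonian. Up to swapping `C₁, C₂`, the
edge `ab` lies in `C₁` and some edge `cd` of `C'` lies in `C₂`: if `C₂` shares no edge with `C'`,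
then `C₂ ≤ G'`, so `C₂ = G'` by 2-regularity, and the roles can be exchanged. Inserting `v` into
`ab` in `G'` and `C₁` and into `cd` in `C'` and `C₂` keeps the three cycles Hamiltonian, and the
identity `G' + C' = C₁ + C₂` survives because on each side one copy of `ab` and of `cd` is
replaced by the same four new edges.
-/

def subdivide {n : ℕ} (E : Edges n) (a b v : Fin n) : Edges n :=
  E.erase s(a, b) + {s(a, v), s(v, b)}

theorem Multiset.erase_add_erase_of_add_eq {α : Type*} [DecidableEq α] {A B C D : Multiset α}
    {x y : α} (h : A + B = C + D) (hxA : x ∈ A) (hxC : x ∈ C) (hyB : y ∈ B) (hyD : y ∈ D) :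
    A.erase x + B.erase y = C.erase x + D.erase y := by
  have h' : ((A + B).erase x).erase y = ((C + D).erase x).erase y := by rw [h]
  rwa [erase_add_left_pos _ hxA, erase_add_right_pos _ hyB, erase_add_left_pos _ hxC,
    erase_add_right_pos _ hyD] at h'

section Degree

variable {n : ℕ} {E F : Edges n} {a b u v : Fin n}

theorem edeg_add (E F : Edges n) (u : Fin n) : edeg (E + F) u = edeg E u + edeg F u := by
  simp [edeg, Multiset.filter_add]

theorem edeg_singleton (e : Sym2 (Fin n)) (u : Fin n) :
    edeg ({e} : Edges n) u = if u ∈ e then 1 else 0 := by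
  simp only [edeg, Multiset.filter_singleton]
  split <;> simp

theorem edeg_pos_of_mem {e : Sym2 (Fin n)} (he : e ∈ E) (hu : u ∈ e) : 0 < edeg E u :=
  Multiset.card_pos_iff_exists_mem.mpr ⟨e, Multiset.mem_filter.mpr ⟨he, hu⟩⟩

theorem edeg_erase {e : Sym2 (Fin n)} (he : e ∈ E) (u : Fin n) :
    edeg E u = edeg (E.erase e) u + if u ∈ e then 1 else 0 := by
  conv_lhs => rw [← Multiset.cons_erase he, ← Multiset.singleton_add]
  rw [edeg_add, edeg_singleton, add_comm]

theorem edeg_subdivide_of_ne (he : s(a, b) ∈ E) (hab : a ≠ b) (hu : u ≠ v) :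
    edeg (subdivide E a b v) u = edeg E u := by
  have hpair : ({s(a, v), s(v, b)} : Edges n) = {s(a, v)} + {s(v, b)} := rfl
  rw [edeg_erase he u, subdivide, hpair, edeg_add, edeg_add, edeg_singleton, edeg_singleton]
  simp only [Sym2.mem_iff, or_iff_left hu, or_iff_right hu]
  split_ifs <;> simp_all

theorem edeg_subdivide_self (he : s(a, b) ∈ E) (hav : a ≠ v) (hbv : b ≠ v) :
    edeg (subdivide E a b v) v = edeg E v + 2 := by
  have hpair : ({s(a, v), s(v, b)} : Edges n) = {s(a, v)} + {s(v, b)} := rfl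
  rw [edeg_erase he v, subdivide, hpair, edeg_add, edeg_add, edeg_singleton, edeg_singleton]
  simp [Sym2.mem_iff, hav.symm, hbv.symm]

theorem eq_of_le_of_edeg_eq (hle : E ≤ F) (h : ∀ u, edeg E u = edeg F u) : E = F := by
  obtain ⟨D, rfl⟩ := Multiset.le_iff_exists_add.mp hle
  suffices D = 0 by rw [this, add_zero]
  refine Multiset.eq_zero_of_forall_notMem fun e he => ?_
  induction e using Sym2.ind with
  | _ x y =>
    have := h x
    have := edeg_pos_of_mem he (Sym2.mem_mk_left x y)
    rw [edeg_add] at *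
    omega

end Degree

theorem EAdj.symm {n : ℕ} {E : Edges n} {u v : Fin n} (h : EAdj E u v) : EAdj E v u :=
  ⟨h.1.symm, Sym2.eq_swap ▸ h.2⟩

section Subdivision

variable {n : ℕ} {V : Finset (Fin n)} {E : Edges n} {a b v : Fin n}

theorem TwoRegularOn.mem_of_mem_edge {u : Fin n} {e : Sym2 (Fin n)} (hE : TwoRegularOn V E)
    (he : e ∈ E) (hu : u ∈ e) : u ∈ V := by
  by_contra h
  have := edeg_pos_of_mem he hu
  rw [hE.2.2 u h] at this
  exact this.false

theorem TwoRegularOn.exists_mem (hE : TwoRegularOn V E) (ha : a ∈ V) : ∃ e, e ∈ E := by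
  have : 0 < edeg E a := by rw [hE.2.1 a ha]; norm_num
  obtain ⟨e, he⟩ := Multiset.card_pos_iff_exists_mem.mp this
  exact ⟨e, (Multiset.mem_filter.mp he).1⟩

theorem loopless_subdivide (hE : Loopless E) (hav : a ≠ v) (hbv : b ≠ v) :
    Loopless (subdivide E a b v) := by
  intro e he
  rcases Multiset.mem_add.mp he with he | he
  · exact hE e (Multiset.mem_of_mem_erase he)
  · simp only [Multiset.insert_eq_cons, Multiset.mem_cons, Multiset.mem_singleton] at he
    rcases he with rfl | rfl <;> simpa [Sym2.mk_isDiag_iff, eq_comm]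

theorem twoRegularOn_subdivide (hE : TwoRegularOn V E) (hv : v ∉ V) (hab : s(a, b) ∈ E) :
    TwoRegularOn (insert v V) (subdivide E a b v) := by
  have haV := hE.mem_of_mem_edge hab (Sym2.mem_mk_left a b)
  have hbV := hE.mem_of_mem_edge hab (Sym2.mem_mk_right a b)
  have hav : a ≠ v := fun h => hv (h ▸ haV)
  have hbv : b ≠ v := fun h => hv (h ▸ hbV)
  have hne : a ≠ b := fun h => hE.1 _ hab (Sym2.mk_isDiag_iff.mpr h)
  refine ⟨loopless_subdivide hE.1 hav hbv, fun u hu => ?_, fun u hu => ?_⟩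
  · rcases Finset.mem_insert.mp hu with rfl | hu
    · rw [edeg_subdivide_self hab hav hbv, hE.2.2 u hv]
    · rw [edeg_subdivide_of_ne hab hne (ne_of_mem_of_not_mem hu hv), hE.2.1 u hu]
  · rw [Finset.mem_insert, not_or] at hu
    rw [edeg_subdivide_of_ne hab hne hu.1, hE.2.2 u hu.2]

theorem isHamOn_subdivide (hE : IsHamOn V E) (hv : v ∉ V) (hab : s(a, b) ∈ E) :
    IsHamOn (insert v V) (subdivide E a b v) := by
  have haV := hE.1.mem_of_mem_edge hab (Sym2.mem_mk_left a b)
  have hav : a ≠ v := fun h => hv (h ▸ haV)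
  have hbv : b ≠ v := fun h => hv (h ▸ hE.1.mem_of_mem_edge hab (Sym2.mem_mk_right a b))
  have hmem_av : s(a, v) ∈ subdivide E a b v := by simp [subdivide]
  have hmem_vb : s(v, b) ∈ subdivide E a b v := by simp [subdivide]
  have hadj_av : EAdj (subdivide E a b v) a v := ⟨hav, hmem_av⟩
  have hadj_vb : EAdj (subdivide E a b v) v b := ⟨hbv.symm, hmem_vb⟩
  have hlift : ∀ x y, EAdj E x y → Relation.ReflTransGen (EAdj (subdivide E a b v)) x y := by
    rintro x y ⟨hxy, hmem⟩
    by_cases hxy_ab : s(x, y) = s(a, b)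
    · rcases Sym2.eq_iff.mp hxy_ab with ⟨rfl, rfl⟩ | ⟨rfl, rfl⟩
      · exact .tail (.single hadj_av) hadj_vb
      · exact .tail (.single (EAdj.symm hadj_vb)) (EAdj.symm hadj_av)
    · exact .single
        ⟨hxy, Multiset.mem_add.mpr (.inl ((Multiset.mem_erase_of_ne hxy_ab).mpr hmem))⟩
  have hconn : ∀ u ∈ V, ∀ w ∈ V, Relation.ReflTransGen (EAdj (subdivide E a b v)) u w :=
    fun u hu w hw => Relation.ReflTransGen.lift' id hlift u w (hE.2 u hu w hw)
  refine ⟨twoRegularOn_subdivide hE.1 hv hab, fun u hu w hw => ?_⟩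
  rcases Finset.mem_insert.mp hu with rfl | huV <;> rcases Finset.mem_insert.mp hw with rfl | hwV
  · exact .refl
  · exact .head (EAdj.symm hadj_av) (hconn a haV w hwV)
  · exact .tail (hconn u huV a haV) hadj_av
  · exact hconn u huV w hwV

end Subdivision

section Decomposition

variable {n : ℕ} {V : Finset (Fin n)} {G C C₁ C₂ : Edges n}

theorem twoRegularOn_of_add_eq (hC : TwoRegularOn V C) (h₁ : TwoRegularOn V C₁)
    (h₂ : TwoRegularOn V C₂) (heq : G + C = C₁ + C₂) : TwoRegularOn V G := by
  have hdeg u : edeg G u + edeg C u = edeg C₁ u + edeg C₂ u := by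
    rw [← edeg_add, ← edeg_add, heq]
  refine ⟨fun e he => ?_, fun u hu => ?_, fun u hu => ?_⟩
  · have he' : e ∈ C₁ + C₂ := heq ▸ Multiset.mem_add.mpr (.inl he)
    rcases Multiset.mem_add.mp he' with he' | he'
    exacts [h₁.1 e he', h₂.1 e he']
  · have := hdeg u
    rw [hC.2.1 u hu, h₁.2.1 u hu, h₂.2.1 u hu] at this
    omega
  · have := hdeg u
    rw [hC.2.2 u hu, h₁.2.2 u hu, h₂.2.2 u hu] at this
    omega

theorem eq_of_add_eq_of_forall_not_mem (hG : TwoRegularOn V G) (h₂ : TwoRegularOn V C₂)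
    (heq : G + C = C₁ + C₂) (hdisj : ∀ e ∈ C₂, e ∉ C) : C₂ = G := by
  have hle : C₂ ≤ G := Multiset.le_iff_count.mpr fun e => by
    by_cases he : e ∈ C₂
    · have := congrArg (Multiset.count e) heq
      rw [Multiset.count_add, Multiset.count_add, Multiset.count_eq_zero.mpr (hdisj e he)] at this
      omega
    · simp [Multiset.count_eq_zero.mpr he]
  refine eq_of_le_of_edeg_eq hle fun u => ?_
  by_cases hu : u ∈ V
  · rw [h₂.2.1 u hu, hG.2.1 u hu]
  · rw [h₂.2.2 u hu, hG.2.2 u hu]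

def SplitsAt (V : Finset (Fin n)) (G C : Edges n) (a b c d : Fin n) : Prop :=
  ∃ D₁ D₂ : Edges n, IsHamOn V D₁ ∧ IsHamOn V D₂ ∧ G + C = D₁ + D₂ ∧
    s(a, b) ∈ D₁ ∧ s(c, d) ∈ D₂ ∧ s(c, d) ∈ C

theorem exists_splitsAt_of_mem_left {a b : Fin n} (hC : IsHamOn V C) (h₁ : IsHamOn V C₁)
    (h₂ : IsHamOn V C₂) (heq : G + C = C₁ + C₂) (hab : s(a, b) ∈ G)
    (hab₁ : s(a, b) ∈ C₁) :
    ∃ c d, SplitsAt V G C a b c d := by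
  by_cases hshare : ∃ e ∈ C₂, e ∈ C
  · obtain ⟨e, he₂, heC⟩ := hshare
    induction e using Sym2.ind with
    | _ c d => exact ⟨c, d, C₁, C₂, h₁, h₂, heq, hab₁, he₂, heC⟩
  · push Not at hshare
    have hG := twoRegularOn_of_add_eq hC.1 h₁.1 h₂.1 heq
    have hC₂ : C₂ = G := eq_of_add_eq_of_forall_not_mem hG h₂.1 heq hshare
    rw [hC₂] at heq
    have hC₁ : C₁ = C := add_right_cancel (heq.symm.trans (add_comm G C))
    obtain ⟨e, he⟩ := hC.1.exists_mem (hG.mem_of_mem_edge hab (Sym2.mem_mk_left a b))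
    induction e using Sym2.ind with
    | _ c d =>
      exact ⟨c, d, C₂, C₁, h₂, h₁, by rw [hC₂, hC₁], hC₂ ▸ hab, hC₁ ▸ he, he⟩

theorem CompatibleOn.exists_splitsAt {a b : Fin n} (h : CompatibleOn V G C)
    (hab : s(a, b) ∈ G) : ∃ c d, SplitsAt V G C a b c d := by
  obtain ⟨hC, C₁, C₂, h₁, h₂, heq⟩ := h
  rcases Multiset.mem_add.mp (heq ▸ Multiset.mem_add.mpr (.inl hab) : s(a, b) ∈ C₁ + C₂)
    with hab₁ | hab₂
  · exact exists_splitsAt_of_mem_left hC h₁ h₂ heq hab hab₁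
  · exact exists_splitsAt_of_mem_left hC h₂ h₁ (heq.trans (add_comm _ _)) hab hab₂

end Decomposition

section Extension

variable {n : ℕ} {V : Finset (Fin n)}

theorem compatibleOn_subdivide {G C : Edges n} {a b c d v : Fin n} (hC : IsHamOn V C)
    (hv : v ∉ V) (hab : s(a, b) ∈ G) (hsplit : SplitsAt V G C a b c d) :
    CompatibleOn (insert v V) (subdivide G a b v) (subdivide C c d v) := by
  obtain ⟨D₁, D₂, h₁, h₂, heq, hab₁, hcd₂, hcd⟩ := hsplit
  refine ⟨isHamOn_subdivide hC hv hcd, subdivide D₁ a b v, subdivide D₂ c d v,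
    isHamOn_subdivide h₁ hv hab₁, isHamOn_subdivide h₂ hv hcd₂, ?_⟩
  rw [subdivide, subdivide, subdivide, subdivide, add_add_add_comm, add_add_add_comm (D₁.erase _),
    Multiset.erase_add_erase_of_add_eq heq hab hab₁ hcd hcd₂]

theorem CompatibleOn.insertV {G G' C' : Edges n} {v : Fin n} (hC' : CompatibleOn V G' C')
    (hv : v ∉ V) (hins : InsertV v G G') :
    ∃ C, InsertV v C C' ∧ CompatibleOn (insert v V) G C := by
  obtain ⟨a, b, -, -, hab, rfl⟩ := hins
  obtain ⟨c, d, hsplit⟩ := hC'.exists_splitsAt hab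
  have hcd : s(c, d) ∈ C' := by obtain ⟨_, _, _, _, _, _, _, h⟩ := hsplit; exact h
  have hcv := ne_of_mem_of_not_mem (hC'.1.1.mem_of_mem_edge hcd (Sym2.mem_mk_left c d)) hv
  have hdv := ne_of_mem_of_not_mem (hC'.1.1.mem_of_mem_edge hcd (Sym2.mem_mk_right c d)) hv
  exact ⟨subdivide C' c d v, ⟨c, d, hcv, hdv, hcd, rfl⟩,
    compatibleOn_subdivide hC'.1 hv hab hsplit⟩

theorem CompatibleOn.insertList {G F C' : Edges n} {l : List (Fin n)} (hl : l.Nodup)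
    (hlV : ∀ x ∈ l, x ∉ V) (hins : InsertList l G F) (hC' : CompatibleOn V F C') :
    ∃ C, InsertList l C C' ∧ CompatibleOn (V ∪ l.toFinset) G C := by
  induction l generalizing G with
  | nil => exact ⟨C', rfl, by simpa [InsertList] using hins ▸ hC'⟩
  | cons v t ih =>
    obtain ⟨E, hvE, htE⟩ := hins
    obtain ⟨hvt, ht⟩ := List.nodup_cons.mp hl
    obtain ⟨D, htD, hD⟩ := ih ht (fun x hx => hlV x (List.mem_cons_of_mem v hx)) htE
    have hv : v ∉ V ∪ t.toFinset := by
      simpa [hvt] using hlV v List.mem_cons_self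
    obtain ⟨C, hvC, hC⟩ := hD.insertV hv hvE
    refine ⟨C, ⟨D, hvC, htD⟩, ?_⟩
    rwa [List.toFinset_cons, Finset.union_insert]

end Extension

theorem isHam_of_isHamOn_univ {n : ℕ} {E : Edges n} (h : IsHamOn Finset.univ E) : IsHam E :=
  ⟨h.1.1, fun v => h.1.2.1 v (Finset.mem_univ v),
    fun u w => h.2 u (Finset.mem_univ u) w (Finset.mem_univ w)⟩

theorem compatible_of_compatibleOn_univ {n : ℕ} {G C : Edges n}
    (h : CompatibleOn Finset.univ G C) : Compatible G C :=
  let ⟨hC, C₁, C₂, h₁, h₂, heq⟩ := h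
  ⟨isHam_of_isHamOn_univ hC, C₁, C₂, isHam_of_isHamOn_univ h₁, isHam_of_isHamOn_univ h₂,
    heq⟩

open Nat in
theorem compatible_cycle_extends_through_contraction_general (n : ℕ)
    (G G' : Edges n) (S : Finset (Fin n))
    (l : List (Fin n)) (hl : l.Nodup) (hlS : l.toFinset = S)
    (hins : InsertList l G G')
    (C' : Edges n) (hC' : CompatibleOn Sᶜ G' C') :
    (∃ (C : Edges n) (l' : List (Fin n)), l'.Nodup ∧ l'.toFinset = S ∧
        InsertList l' C C' ∧ Compatible G C) ∧
      ∃ C : Edges n, Compatible G C := by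
  have hlS' : ∀ x ∈ l, x ∉ Sᶜ := fun x hx => by simpa [← hlS] using hx
  obtain ⟨C, hCins, hC⟩ := hC'.insertList hl hlS' hins
  rw [hlS, Finset.union_comm, Finset.union_compl] at hC
  have hcomp := compatible_of_compatibleOn_univ hC
  exact ⟨⟨C, l, hl, hlS, hCins, hcomp⟩, C, hcomp⟩

open Nat in
theorem compatible_cycle_extends_through_contraction (n k : ℕ)
    (G G' : Edges n) (S : Finset (Fin n)) (hS : S.card = k) (hnk : Even (n - k))
    (hG : TwoRegular G)
    (hG' : TwoRegularOn Sᶜ G')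
    (hEv : ∀ v ∉ S, Even (Set.ncard {u | Relation.ReflTransGen (EAdj G') v u}))
    (l : List (Fin n)) (hl : l.Nodup) (hlS : l.toFinset = S)
    (hins : InsertList l G G')
    (C' : Edges n) (hC' : CompatibleOn Sᶜ G' C') :
    (∃ (C : Edges n) (l' : List (Fin n)), l'.Nodup ∧ l'.toFinset = S ∧
        InsertList l' C C' ∧ Compatible G C) ∧
      ∃ C : Edges n, Compatible G C :=
  compatible_cycle_extends_through_contraction_general n G G' S l hl hlS hins C' hC'
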